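/- Let Γ be a discrete group and L an integer-valued proper length function on Γ. For n ∈ ℕ let C_n := {g ∈ Γ : L(g) = n} and let 1_n be the indicator function of C_n, so ‖1_n‖₂ = √|C_n|. If there exists a polynomial P with real coefficients such that ⦀1_n⦀ ≤ P(n)·‖1_n‖₂ for all n ∈ ℕ, then Γ has radial rapid decay with respect to L: there exists a polynomial Q such that ⦀f⦀ ≤ Q(L(f))·‖f‖₂ for every radial finitely supported f : Γ → ℂ. -/

import Mathlib

/-!
A radial `f` with `L(f) = N` is `∑_{n ≤ N} c_n 1_n` for its profile `c`. The triangle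
inequality and the hypothesis on spheres give `⦀f⦀ ≤ ∑_{n ≤ N} |c_n| P(n) √|C_n|`, and by
Cauchy–Schwarz this is at most `(∑_{n ≤ N} P(n)²)^{1/2} ‖f‖₂`, since the spheres are disjoint and
`‖f‖₂² = ∑_n |c_n|² |C_n|`. The first factor is at most `(N + 1) · P̃(N)`, where `P̃` is `P` with
its coefficients replaced by their absolute values.
-/

open MeasureTheory
open scoped ENNReal

namespace Stmt2

variable {G : Type*} [Group G]

/-- Convolution of a finitely supported function with an arbitrary function. -/
noncomputable def conv (f : G →₀ ℂ) (ξ : G → ℂ) : G → ℂ :=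
  fun g => ∑ h ∈ f.support, f h * ξ (h⁻¹ * g)

/-- The operator norm of the convolution operator `ξ ↦ f * ξ` on `ℓ²(G)` is at most `C`. -/
noncomputable def ConvOpNormLE (f : G →₀ ℂ) (C : ℝ) : Prop :=
  ∀ ξ : lp (fun _ : G => ℂ) 2, ∃ hmem : Memℓp (conv f (ξ : ∀ _ : G, ℂ)) 2,
    ‖(⟨conv f (ξ : ∀ _ : G, ℂ), hmem⟩ : lp (fun _ : G => ℂ) 2)‖ ≤ C * ‖ξ‖

/-- The ℓ²-norm of a finitely supported function. -/
noncomputable def l2norm (f : G →₀ ℂ) : ℝ :=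
  Real.sqrt (∑ g ∈ f.support, ‖f g‖ ^ 2)

/-- `L(f) = max {L g : f g ≠ 0}`. -/
noncomputable def lenOf (L : G → ℝ) (f : G →₀ ℂ) : ℝ :=
  sSup (L '' {g | f g ≠ 0})

def IsLengthFun (L : G → ℝ) : Prop :=
  L 1 = 0 ∧ (∀ g, 0 ≤ L g) ∧ (∀ g, L g⁻¹ = L g) ∧ ∀ g h, L (g * h) ≤ L g + L h

def Radial (L : G → ℝ) (f : G →₀ ℂ) : Prop :=
  ∀ g₁ g₂, L g₁ = L g₂ → f g₁ = f g₂

/-- Radial rapid decay with respect to `L`. -/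
def HasRRD (L : G → ℝ) : Prop :=
  ∃ Q : Polynomial ℝ, ∀ f : G →₀ ℂ, Radial L f →
    ConvOpNormLE f (Q.eval (lenOf L f) * l2norm f)

end Stmt2

open Finset

namespace Polynomial

noncomputable def absCoeffs (P : ℝ[X]) : ℝ[X] :=
  ∑ i ∈ P.support, C |P.coeff i| * X ^ i

lemma abs_eval_le_eval_absCoeffs (P : ℝ[X]) {x y : ℝ} (hx : 0 ≤ x) (hxy : x ≤ y) :
    |P.eval x| ≤ (absCoeffs P).eval y := by
  rw [eval_eq_sum, sum_def]
  simp only [absCoeffs, eval_finsetSum, eval_mul, eval_C, eval_pow, eval_X]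
  refine (abs_sum_le_sum_abs _ _).trans (sum_le_sum fun i _ => ?_)
  rw [abs_mul, abs_pow, abs_of_nonneg hx]
  gcongr

lemma exists_sqrt_sum_range_sq_eval_le (P : ℝ[X]) :
    ∃ Q : ℝ[X], ∀ N : ℕ, √(∑ n ∈ range (N + 1), P.eval (n : ℝ) ^ 2) ≤ Q.eval (N : ℝ) := by
  refine ⟨(X + 1) * absCoeffs P, fun N => ?_⟩
  set A := (absCoeffs P).eval (N : ℝ)
  have hbound : ∀ n ∈ range (N + 1), |P.eval (n : ℝ)| ≤ A := fun n hn =>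
    abs_eval_le_eval_absCoeffs P n.cast_nonneg
      (Nat.cast_le.mpr (Nat.lt_succ_iff.mp (mem_range.mp hn)))
  have hA : 0 ≤ A := (abs_nonneg _).trans (hbound 0 (by simp))
  have hsum : ∑ n ∈ range (N + 1), P.eval (n : ℝ) ^ 2 ≤ (N + 1 : ℝ) * A ^ 2 := by
    calc ∑ n ∈ range (N + 1), P.eval (n : ℝ) ^ 2
        ≤ ∑ _n ∈ range (N + 1), A ^ 2 :=
          sum_le_sum fun n hn => sq_le_sq.2 ((hbound n hn).trans (le_abs_self A))
      _ = (N + 1 : ℝ) * A ^ 2 := by simp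
  simp only [eval_mul, eval_add, eval_X, eval_one]
  rw [Real.sqrt_le_iff]
  refine ⟨by positivity, hsum.trans ?_⟩
  have : (N + 1 : ℝ) ≤ (N + 1 : ℝ) ^ 2 := by nlinarith [N.cast_nonneg (α := ℝ)]
  nlinarith [sq_nonneg A]

end Polynomial

lemma sum_norm_mul_mul_sqrt_le {ι : Type*} (s : Finset ι) (c : ι → ℂ) (a : ι → ℝ) (k : ι → ℕ) :
    ∑ i ∈ s, ‖c i‖ * (a i * √(k i)) ≤ √(∑ i ∈ s, a i ^ 2) * √(∑ i ∈ s, (k i : ℝ) * ‖c i‖ ^ 2) := by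
  calc ∑ i ∈ s, ‖c i‖ * (a i * √(k i)) = ∑ i ∈ s, a i * (‖c i‖ * √(k i)) :=
        sum_congr rfl fun i _ => by ring
    _ ≤ √(∑ i ∈ s, a i ^ 2) * √(∑ i ∈ s, (‖c i‖ * √(k i)) ^ 2) :=
        Real.sum_mul_le_sqrt_mul_sqrt s a _
    _ = √(∑ i ∈ s, a i ^ 2) * √(∑ i ∈ s, (k i : ℝ) * ‖c i‖ ^ 2) := by
        simp only [mul_pow, Real.sq_sqrt (Nat.cast_nonneg _), mul_comm]

namespace Stmt2

variable {G : Type*}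

section Convolution

variable [Group G]

lemma conv_eq_sum_of_support_subset (f : G →₀ ℂ) (ξ : G → ℂ) {S : Finset G}
    (hS : f.support ⊆ S) (g : G) : conv f ξ g = ∑ h ∈ S, f h * ξ (h⁻¹ * g) :=
  sum_subset hS fun h _ hh => by simp [Finsupp.notMem_support_iff.mp hh]

lemma conv_add (f₁ f₂ : G →₀ ℂ) (ξ : G → ℂ) : conv (f₁ + f₂) ξ = conv f₁ ξ + conv f₂ ξ := by
  classical
  funext g
  rw [Pi.add_apply, conv_eq_sum_of_support_subset _ ξ Finsupp.support_add,
    conv_eq_sum_of_support_subset f₁ ξ subset_union_left,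
    conv_eq_sum_of_support_subset f₂ ξ subset_union_right, ← sum_add_distrib]
  simp only [Finsupp.add_apply, add_mul]

lemma conv_smul (c : ℂ) (f : G →₀ ℂ) (ξ : G → ℂ) : conv (c • f) ξ = c • conv f ξ := by
  funext g
  rw [conv_eq_sum_of_support_subset _ ξ Finsupp.support_smul, Pi.smul_apply, conv,
    smul_eq_mul, mul_sum]
  simp only [Finsupp.smul_apply, smul_eq_mul, mul_assoc]

lemma convOpNormLE_iff (f : G →₀ ℂ) (C : ℝ) :
    ConvOpNormLE f C ↔ ∀ ξ : lp (fun _ : G => ℂ) 2,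
      ∃ η : lp (fun _ : G => ℂ) 2, ⇑η = conv f ξ ∧ ‖η‖ ≤ C * ‖ξ‖ := by
  refine forall_congr' fun ξ => ⟨fun ⟨hmem, hle⟩ => ⟨_, rfl, hle⟩, ?_⟩
  rintro ⟨⟨η, hmem⟩, hη, hle⟩
  obtain rfl : η = conv f ξ := hη
  exact ⟨hmem, hle⟩

namespace ConvOpNormLE

lemma zero : ConvOpNormLE (0 : G →₀ ℂ) 0 :=
  (convOpNormLE_iff _ _).2 fun _ => ⟨0, funext fun _ => by simp [conv], by simp⟩

lemma mono {f : G →₀ ℂ} {C C' : ℝ} (h : ConvOpNormLE f C) (hCC' : C ≤ C') :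
    ConvOpNormLE f C' := fun ξ =>
  (h ξ).imp fun _ hle => hle.trans (mul_le_mul_of_nonneg_right hCC' (norm_nonneg ξ))

lemma add {f₁ f₂ : G →₀ ℂ} {C₁ C₂ : ℝ} (h₁ : ConvOpNormLE f₁ C₁) (h₂ : ConvOpNormLE f₂ C₂) :
    ConvOpNormLE (f₁ + f₂) (C₁ + C₂) := by
  refine (convOpNormLE_iff _ _).2 fun ξ => ?_
  obtain ⟨η₁, hη₁, hle₁⟩ := (convOpNormLE_iff _ _).1 h₁ ξ
  obtain ⟨η₂, hη₂, hle₂⟩ := (convOpNormLE_iff _ _).1 h₂ ξ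
  refine ⟨η₁ + η₂, by rw [lp.coeFn_add, hη₁, hη₂, conv_add], ?_⟩
  linarith [norm_add_le η₁ η₂]

lemma smul {f : G →₀ ℂ} {C : ℝ} (h : ConvOpNormLE f C) (c : ℂ) :
    ConvOpNormLE (c • f) (‖c‖ * C) := by
  refine (convOpNormLE_iff _ _).2 fun ξ => ?_
  obtain ⟨η, hη, hle⟩ := (convOpNormLE_iff _ _).1 h ξ
  refine ⟨c • η, by rw [lp.coeFn_smul, hη, conv_smul], ?_⟩
  rw [norm_smul, mul_assoc]
  exact mul_le_mul_of_nonneg_left hle (norm_nonneg c)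

lemma sum {ι : Type*} (s : Finset ι) {f : ι → G →₀ ℂ} {C : ι → ℝ}
    (h : ∀ i ∈ s, ConvOpNormLE (f i) (C i)) :
    ConvOpNormLE (∑ i ∈ s, f i) (∑ i ∈ s, C i) := by
  classical
  induction s using Finset.induction_on with
  | empty => simpa using zero
  | insert i s hi ih =>
    rw [sum_insert hi, sum_insert hi]
    exact (h i (mem_insert_self i s)).add (ih fun j hj => h j (mem_insert_of_mem hj))

end ConvOpNormLE

end Convolution

variable {L : G → ℝ}

lemma exists_nat_lenOf_eq (hint : ∀ g, ∃ n : ℕ, L g = n) (f : G →₀ ℂ) :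
    ∃ N : ℕ, lenOf L f = N ∧ ∀ g, f g ≠ 0 → L g ≤ N := by
  have hfinite : (L '' {g | f g ≠ 0}).Finite := f.hasFiniteSupport.image L
  rcases (L '' {g | f g ≠ 0}).eq_empty_or_nonempty with hempty | hne
  · exact ⟨0, by simp [lenOf, hempty], fun g hg =>
      (Set.notMem_empty _ (hempty ▸ Set.mem_image_of_mem L hg)).elim⟩
  · obtain ⟨g₀, -, hg₀⟩ := hne.csSup_mem hfinite
    obtain ⟨N, hN⟩ := hint g₀
    have hlen : lenOf L f = N := hg₀.symm.trans hN
    exact ⟨N, hlen, fun g hg =>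
      (le_csSup hfinite.bddAbove (Set.mem_image_of_mem L hg)).trans_eq hlen⟩

lemma Radial.eq_extend_apply {f : G →₀ ℂ} (hrad : Radial L f) (g : G) :
    f g = Function.extend L f 0 (L g) :=
  (Function.FactorsThrough.extend_apply (fun a b hab => hrad a b hab) 0 g).symm

noncomputable abbrev sphereIndicator (hfin : ∀ n : ℕ, {g : G | L g = n}.Finite) (n : ℕ) :
    G →₀ ℂ :=
  Finsupp.indicator (hfin n).toFinset fun _ _ => 1

section RadialDecomposition

variable {hfin : ∀ n : ℕ, {g : G | L g = n}.Finite} {f : G →₀ ℂ} {c : ℝ → ℂ} {N : ℕ}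

lemma sphereIndicator_apply (n : ℕ) (g : G) :
    sphereIndicator hfin n g = if L g = n then 1 else 0 := by
  classical
  simp [sphereIndicator, Finsupp.indicator_apply]

lemma eq_sum_smul_sphereIndicator (hint : ∀ g, ∃ n : ℕ, L g = n) (hc : ∀ g, f g = c (L g))
    (hsupp : ∀ g, f g ≠ 0 → L g ≤ N) :
    f = ∑ n ∈ range (N + 1), c n • sphereIndicator hfin n := by
  ext g
  obtain ⟨m, hm⟩ := hint g
  simp only [Finsupp.finsetSum_apply, Finsupp.smul_apply, sphereIndicator_apply, hm,
    Nat.cast_inj, smul_eq_mul, mul_ite, mul_one, mul_zero, sum_ite_eq, mem_range]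
  split_ifs with hmN
  · rw [hc, hm]
  · by_contra hfg
    exact hmN (Nat.lt_succ_of_le (by exact_mod_cast hm ▸ hsupp g hfg))

lemma l2norm_eq_sqrt_sum_card_mul_sq (hint : ∀ g, ∃ n : ℕ, L g = n)
    (hc : ∀ g, f g = c (L g)) (hsupp : ∀ g, f g ≠ 0 → L g ≤ N) :
    l2norm f = √(∑ n ∈ range (N + 1), ((hfin n).toFinset.card : ℝ) * ‖c n‖ ^ 2) := by
  classical
  have hsub : f.support ⊆ (range (N + 1)).biUnion fun n => (hfin n).toFinset := by
    intro g hg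
    obtain ⟨m, hm⟩ := hint g
    refine mem_biUnion.2 ⟨m, mem_range.2 (Nat.lt_succ_of_le ?_), (hfin m).mem_toFinset.2 hm⟩
    exact_mod_cast hm ▸ hsupp g (Finsupp.mem_support_iff.1 hg)
  have hdisj : (range (N + 1) : Set ℕ).PairwiseDisjoint fun n => (hfin n).toFinset :=
    fun a _ b _ hab => disjoint_left.2 fun g hga hgb => hab <| Nat.cast_inj.1 <|
      ((hfin a).mem_toFinset.1 hga).symm.trans ((hfin b).mem_toFinset.1 hgb)
  rw [l2norm, sum_subset hsub fun g _ hg => by simp [Finsupp.notMem_support_iff.1 hg],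
    sum_biUnion hdisj]
  congr 1
  refine sum_congr rfl fun n _ => ?_
  rw [sum_congr rfl fun g hg => by rw [hc g, (hfin n).mem_toFinset.1 hg], sum_const,
    nsmul_eq_mul]

end RadialDecomposition

end Stmt2

theorem statement2_general
    {Γ : Type*} [Group Γ] (L : Γ → ℝ)
    (hint : ∀ g : Γ, ∃ n : ℕ, L g = n)
    (hfin : ∀ n : ℕ, {g : Γ | L g = n}.Finite)
    (P : Polynomial ℝ)
    (hP : ∀ n : ℕ,
      Stmt2.ConvOpNormLE
        (Finsupp.indicator (hfin n).toFinset fun _ _ => (1 : ℂ))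
        (P.eval (n : ℝ) * Real.sqrt ((hfin n).toFinset.card))) :
    Stmt2.HasRRD L := by
  obtain ⟨Q, hQ⟩ := P.exists_sqrt_sum_range_sq_eval_le
  refine ⟨Q, fun f hrad => ?_⟩
  obtain ⟨N, hlen, hsupp⟩ := Stmt2.exists_nat_lenOf_eq hint f
  set c := Function.extend L f 0
  have hc : ∀ g, f g = c (L g) := hrad.eq_extend_apply
  have hbound := Stmt2.ConvOpNormLE.sum (range (N + 1)) fun n _ => (hP n).smul (c n)
  rw [← Stmt2.eq_sum_smul_sphereIndicator (hfin := hfin) hint hc hsupp] at hbound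
  refine hbound.mono ?_
  calc ∑ n ∈ range (N + 1), ‖c n‖ * (P.eval (n : ℝ) * √((hfin n).toFinset.card))
      ≤ √(∑ n ∈ range (N + 1), P.eval (n : ℝ) ^ 2) * Stmt2.l2norm f := by
        rw [Stmt2.l2norm_eq_sqrt_sum_card_mul_sq hint hc hsupp]
        exact sum_norm_mul_mul_sqrt_le _ _ _ _
    _ ≤ Q.eval (Stmt2.lenOf L f) * Stmt2.l2norm f :=
        hlen ▸ mul_le_mul_of_nonneg_right (hQ N) (Real.sqrt_nonneg _)

/-- For an integer-valued proper length function, rapid decay on spheres implies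
radial rapid decay: if `⦀1_n⦀ ≤ P(n)·‖1_n‖₂ = P(n)·√|C_n|` for all `n`, where
`1_n` is the indicator function of the sphere `C_n = {g : L g = n}`, then `Γ`
has radial rapid decay with respect to `L`. -/
theorem statement2
    {Γ : Type*} [Group Γ] (L : Γ → ℝ)
    (hlen : Stmt2.IsLengthFun L)
    (hint : ∀ g : Γ, ∃ n : ℕ, L g = n)
    (hproper : ∀ t : ℝ, {g : Γ | L g ≤ t}.Finite)
    (hfin : ∀ n : ℕ, {g : Γ | L g = n}.Finite)
    (P : Polynomial ℝ)
    (hP : ∀ n : ℕ,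
      Stmt2.ConvOpNormLE
        (Finsupp.indicator (hfin n).toFinset fun _ _ => (1 : ℂ))
        (P.eval (n : ℝ) * Real.sqrt ((hfin n).toFinset.card))) :
    Stmt2.HasRRD L :=
  statement2_general L hint hfin P hP
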